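/- arXiv:2210.04983 — 5 statements merged into one kernel-verified Lean document; each statement's English description precedes it below -/
import Mathlib

section
/- Let ζ, ξ > 0 and define h₂ : ℝ → ℝ∪{+∞} by h₂(u) = 0 for u < 0, h₂(u) = u²/(ζ − ξu) for 0 ≤ u < ζ/ξ, and h₂(u) = +∞ otherwise. Then the Legendre–Fenchel transform h₂*(γ) = sup_u (γu − h₂(u)) satisfies h₂*(γ) = +∞ for γ < 0 and h₂*(γ) = (ζγ²/2)·(1 + ξγ/2 + √(ξγ+1))⁻¹ for γ ≥ 0. -/
/-!
For `γ < 0` the branch `u < 0`, where `h₂` vanishes, already makes `γu - h₂(u)` unbounded.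
For `γ ≥ 0` put `s = √(ξγ + 1)`. On `0 ≤ u < ζ/ξ` one has the identity
`ξ² (u² - (γu - M)(ζ - ξu)) = (s(ζ - ξu) - ζ)²` with `M = ζ(s - 1)²/ξ²`, so `γu - h₂(u) ≤ M`,
with equality at `u = ζ(s - 1)/(ξs)`; on `u < 0` trivially `γu ≤ 0 ≤ M`.
Finally `M` equals the stated closed form because `1 + ξγ/2 + s = (s + 1)²/2`.
-/

open scoped EReal

noncomputable def h2fun (ζ ξ : ℝ) : ℝ → EReal := fun u =>
  if u < 0 then (0 : EReal)
  else if u < ζ / ξ then ((u ^ 2 / (ζ - ξ * u) : ℝ) : EReal)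
  else (⊤ : EReal)

section h2fun

variable {ζ ξ u : ℝ}

lemma h2fun_of_neg (hu : u < 0) : h2fun ζ ξ u = 0 := by
  simp [h2fun, hu]

lemma h2fun_of_nonneg_of_lt (hu₀ : 0 ≤ u) (hu : u < ζ / ξ) :
    h2fun ζ ξ u = ((u ^ 2 / (ζ - ξ * u) : ℝ) : EReal) := by
  simp [h2fun, hu, not_lt.mpr hu₀]

lemma h2fun_of_le (hu₀ : 0 ≤ u) (hu : ζ / ξ ≤ u) : h2fun ζ ξ u = ⊤ := by
  simp [h2fun, not_lt.mpr hu, not_lt.mpr hu₀]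

end h2fun

lemma mul_sub_sq_div_le {ζ ξ γ u : ℝ} (hξ : ξ ≠ 0) (hγ : 0 ≤ ξ * γ + 1) (hu : ξ * u < ζ) :
    γ * u - u ^ 2 / (ζ - ξ * u) ≤ ζ * (√(ξ * γ + 1) - 1) ^ 2 / ξ ^ 2 := by
  set s := √(ξ * γ + 1)
  have hs : s ^ 2 = ξ * γ + 1 := Real.sq_sqrt hγ
  have ht : 0 < ζ - ξ * u := by linarith
  have key : ξ ^ 2 * (u ^ 2 - (γ * u - ζ * (s - 1) ^ 2 / ξ ^ 2) * (ζ - ξ * u)) =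
      (s * (ζ - ξ * u) - ζ) ^ 2 := by
    field_simp
    linear_combination ((ζ - ξ * u) * ζ - (ζ - ξ * u) ^ 2) * hs
  have hle : (γ * u - ζ * (s - 1) ^ 2 / ξ ^ 2) * (ζ - ξ * u) ≤ u ^ 2 :=
    sub_nonneg.mp (nonneg_of_mul_nonneg_right (key ▸ sq_nonneg _) (by positivity))
  linarith [(le_div_iff₀ ht).mpr hle]

lemma exists_mul_sub_sq_div_eq {ζ ξ γ : ℝ} (hζ : 0 < ζ) (hξ : 0 < ξ) (hγ : 0 ≤ γ) :
    ∃ u, 0 ≤ u ∧ u < ζ / ξ ∧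
      γ * u - u ^ 2 / (ζ - ξ * u) = ζ * (√(ξ * γ + 1) - 1) ^ 2 / ξ ^ 2 := by
  set s := √(ξ * γ + 1)
  have hs : s ^ 2 = ξ * γ + 1 := Real.sq_sqrt (by positivity)
  have hs₁ : 1 ≤ s := Real.one_le_sqrt.mpr (by nlinarith)
  have hs₀ : s ≠ 0 := by positivity
  refine ⟨ζ * (s - 1) / (ξ * s), by positivity, ?_, ?_⟩
  · rw [div_lt_div_iff₀ (by positivity) hξ]
    nlinarith
  · have hden : ζ - ξ * (ζ * (s - 1) / (ξ * s)) = ζ / s := by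
      field_simp
      ring
    rw [hden]
    field_simp
    linear_combination (-(s - 1)) * hs

lemma mul_sq_div_two_mul_inv_eq_mul_sqrt_sub_one_sq {ζ ξ γ : ℝ} (hξ : ξ ≠ 0) (hγ : 0 ≤ ξ * γ + 1) :
    ζ * γ ^ 2 / 2 * (1 + ξ * γ / 2 + √(ξ * γ + 1))⁻¹ = ζ * (√(ξ * γ + 1) - 1) ^ 2 / ξ ^ 2 := by
  set s := √(ξ * γ + 1)
  have hs : s ^ 2 = ξ * γ + 1 := Real.sq_sqrt hγ
  have hs₁ : s + 1 ≠ 0 := by positivity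
  have hden : 1 + ξ * γ / 2 + s = (s + 1) ^ 2 / 2 := by linear_combination -hs / 2
  rw [hden]
  field_simp
  linear_combination (-ζ * (s ^ 2 - 1 + ξ * γ)) * hs

lemma coe_mul_sub_h2fun_le {ζ ξ γ : ℝ} (hζ : 0 ≤ ζ) (hξ : 0 < ξ) (hγ : 0 ≤ γ) (u : ℝ) :
    ((γ * u : ℝ) : EReal) - h2fun ζ ξ u ≤ ((ζ * (√(ξ * γ + 1) - 1) ^ 2 / ξ ^ 2 : ℝ) : EReal) := by
  rcases lt_or_ge u 0 with hneg | hnonneg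
  · rw [h2fun_of_neg hneg, sub_zero, EReal.coe_le_coe_iff]
    have : γ * u ≤ 0 := mul_nonpos_of_nonneg_of_nonpos hγ hneg.le
    have : 0 ≤ ζ * (√(ξ * γ + 1) - 1) ^ 2 / ξ ^ 2 := by positivity
    linarith
  rcases lt_or_ge u (ζ / ξ) with hlt | hge
  · rw [h2fun_of_nonneg_of_lt hnonneg hlt, ← EReal.coe_sub, EReal.coe_le_coe_iff]
    exact mul_sub_sq_div_le hξ.ne' (by positivity) ((lt_div_iff₀' hξ).mp hlt)
  · rw [h2fun_of_le hnonneg hge, EReal.sub_top]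
    exact bot_le

lemma iSup_coe_mul_sub_h2fun_of_neg {ζ ξ γ : ℝ} (hγ : γ < 0) :
    (⨆ u : ℝ, (((γ * u : ℝ) : EReal) - h2fun ζ ξ u)) = ⊤ := by
  refine (EReal.eq_top_iff_forall_lt _).mpr fun x => ?_
  set u := (|x| + 1) / γ
  have hu : u < 0 := div_neg_of_pos_of_neg (by positivity) hγ
  refine lt_of_lt_of_le ?_ (le_iSup _ u)
  rw [h2fun_of_neg hu, sub_zero, EReal.coe_lt_coe_iff, mul_div_cancel₀ _ hγ.ne]
  linarith [le_abs_self x]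

theorem h2_legendre_transform (ζ ξ : ℝ) (hζ : 0 < ζ) (hξ : 0 < ξ) :
    (∀ γ : ℝ, γ < 0 → (⨆ u : ℝ, (((γ * u : ℝ) : EReal) - h2fun ζ ξ u)) = ⊤) ∧
    (∀ γ : ℝ, 0 ≤ γ → (⨆ u : ℝ, (((γ * u : ℝ) : EReal) - h2fun ζ ξ u)) =
      ((ζ * γ ^ 2 / 2 * (1 + ξ * γ / 2 + Real.sqrt (ξ * γ + 1))⁻¹ : ℝ) : EReal)) := by
  refine ⟨fun γ hγ => iSup_coe_mul_sub_h2fun_of_neg hγ, fun γ hγ => ?_⟩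
  rw [mul_sq_div_two_mul_inv_eq_mul_sqrt_sub_one_sq hξ.ne' (by positivity)]
  refine le_antisymm (iSup_le (coe_mul_sub_h2fun_le hζ.le hξ hγ)) ?_
  obtain ⟨u, hu₀, hu, hval⟩ := exists_mul_sub_sq_div_eq hζ hξ hγ
  refine le_iSup_of_le u (le_of_eq ?_)
  rw [h2fun_of_nonneg_of_lt hu₀ hu, ← EReal.coe_sub, hval]
end

section
/- In the setting of an irreducible Markov generator W on finite E with stationary π, rates w_{xy}, weights a_{xy}, c = max|a_{xy}|, q = max_x w_{xx}, and ⟨a²⟩_π = Σ_{x≠y} π_x w_{xy} a_{xy}², the operator B^{(k)} f(x) = Σ_{y≠x} a_{xy}^k w_{xy} f(y) applied to the constant function 1 satisfies ‖B^{(k)} 1‖_π ≤ ⟨a²⟩_π^{1/2} q^{1/2} c^{k−1} for every k ≥ 1, and the same bound holds for the ℓ²(π)-adjoint: ‖(B^{(k)})† 1‖_π ≤ ⟨a²⟩_π^{1/2} q^{1/2} c^{k−1}. -/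
/-!
Both vectors are handled row by row. In row `x`, Cauchy–Schwarz with the nonnegative weights
`μ y` (the rates `w x y`, resp. the reversed rates `π y w y x / π x`) gives
`(∑ μ y a^k)² ≤ (∑ μ y) ∑ μ y a^{2k}`, and `a^{2k} ≤ c^{2(k-1)} a²`. The total weight of each row
is the escape rate `w x x ≤ q`: for `B^{(k)}` by the definition of the diagonal, for its adjoint by
stationarity of `π`. Summing the rows against `π` leaves `q c^{2(k-1)} ⟨a²⟩_π`, where for the
adjoint the double sum is first reindexed by swapping `x` and `y`.
-/

open Finset

lemma sq_pow_le_sq_pow_pred_mul_sq {b c : ℝ} {k : ℕ} (hk : 1 ≤ k) (hb : |b| ≤ c) :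
    (b ^ k) ^ 2 ≤ (c ^ (k - 1)) ^ 2 * b ^ 2 := by
  obtain ⟨j, rfl⟩ := Nat.exists_eq_add_of_le' hk
  rw [Nat.add_sub_cancel, pow_succ b, mul_pow]
  refine mul_le_mul_of_nonneg_right ?_ (sq_nonneg b)
  rw [sq_le_sq, abs_pow]
  exact (pow_le_pow_left₀ (abs_nonneg b) hb j).trans (le_abs_self _)

lemma sq_sum_mul_pow_le {ι : Type*} (s : Finset ι) {μ b : ι → ℝ} {c : ℝ} {k : ℕ} (hk : 1 ≤ k)
    (hμ : ∀ i ∈ s, 0 ≤ μ i) (hb : ∀ i ∈ s, |b i| ≤ c) :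
    (∑ i ∈ s, μ i * b i ^ k) ^ 2 ≤ (∑ i ∈ s, μ i) * (c ^ (k - 1)) ^ 2 * ∑ i ∈ s, μ i * b i ^ 2 := by
  rw [mul_assoc, mul_sum]
  refine sum_sq_le_sum_mul_sum_of_sq_le_mul s hμ
    (fun i hi ↦ by have := hμ i hi; positivity) fun i hi ↦ ?_
  calc (μ i * b i ^ k) ^ 2 = μ i ^ 2 * (b i ^ k) ^ 2 := mul_pow ..
    _ ≤ μ i ^ 2 * ((c ^ (k - 1)) ^ 2 * b i ^ 2) := by
      gcongr; exact sq_pow_le_sq_pow_pred_mul_sq hk (hb i hi)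
    _ = μ i * ((c ^ (k - 1)) ^ 2 * (μ i * b i ^ 2)) := by ring

lemma mul_sq_sum_mul_pow_le {ι : Type*} (s : Finset ι) {μ b : ι → ℝ} {p m c : ℝ} {k : ℕ}
    (hk : 1 ≤ k) (hp : 0 ≤ p) (hμ : ∀ i ∈ s, 0 ≤ μ i) (hb : ∀ i ∈ s, |b i| ≤ c)
    (hm : ∑ i ∈ s, μ i ≤ m) :
    p * (∑ i ∈ s, μ i * b i ^ k) ^ 2 ≤ m * (c ^ (k - 1)) ^ 2 * ∑ i ∈ s, p * μ i * b i ^ 2 := by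
  calc p * (∑ i ∈ s, μ i * b i ^ k) ^ 2
      ≤ p * ((∑ i ∈ s, μ i) * (c ^ (k - 1)) ^ 2 * ∑ i ∈ s, μ i * b i ^ 2) := by
        gcongr; exact sq_sum_mul_pow_le s hk hμ hb
    _ ≤ p * (m * (c ^ (k - 1)) ^ 2 * ∑ i ∈ s, μ i * b i ^ 2) := by
        gcongr
        exact sum_nonneg fun i hi ↦ mul_nonneg (hμ i hi) (sq_nonneg _)
    _ = m * (c ^ (k - 1)) ^ 2 * ∑ i ∈ s, p * μ i * b i ^ 2 := by
        simp only [mul_assoc, mul_sum]; ring_nf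

lemma sqrt_sum_le_sqrt_sum_mul_sqrt_mul {ι : Type*} (s : Finset ι) {f g : ι → ℝ} {q C : ℝ}
    (hq : 0 ≤ q) (hC : 0 ≤ C) (h : ∀ i ∈ s, f i ≤ q * C ^ 2 * g i) :
    √(∑ i ∈ s, f i) ≤ √(∑ i ∈ s, g i) * √q * C := by
  calc √(∑ i ∈ s, f i) ≤ √((∑ i ∈ s, g i) * (q * C ^ 2)) := by
        rw [mul_comm, mul_sum]
        exact Real.sqrt_le_sqrt (sum_le_sum h)
    _ = √(∑ i ∈ s, g i) * √q * C := by
        rw [Real.sqrt_mul' _ (by positivity), Real.sqrt_mul hq, Real.sqrt_sq hC, mul_assoc]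

lemma sum_sum_ne_swap {E : Type*} [Fintype E] [DecidableEq E] (F : E → E → ℝ) :
    ∑ x, ∑ y ∈ univ.filter (· ≠ x), F y x = ∑ x, ∑ y ∈ univ.filter (· ≠ x), F x y := by
  simp only [sum_filter]
  rw [sum_comm]
  simp only [ne_comm]

theorem Bk_one_norm_bound_general {E : Type*} [Fintype E] [DecidableEq E]
    (w : E → E → ℝ) (π : E → ℝ) (a : E → E → ℝ) (c q : ℝ) (k : ℕ) (hk : 1 ≤ k)
    (hw : ∀ x y, x ≠ y → 0 ≤ w x y)
    (hdiag : ∀ x, w x x = ∑ y ∈ univ.filter (fun y => y ≠ x), w x y)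
    (hπpos : ∀ x, 0 < π x)
    (hstat : ∀ y, ∑ x ∈ univ.filter (fun x => x ≠ y), π x * w x y = π y * w y y)
    (hc : IsGreatest {r : ℝ | ∃ x y, x ≠ y ∧ r = |a x y|} c)
    (hq : IsGreatest (Set.range fun x => w x x) q) :
    Real.sqrt (∑ x, π x * (∑ y ∈ univ.filter (fun y => y ≠ x), a x y ^ k * w x y) ^ 2)
      ≤ Real.sqrt (∑ x, ∑ y ∈ univ.filter (fun y => y ≠ x), π x * w x y * a x y ^ 2) *
        Real.sqrt q * c ^ (k - 1) ∧
    Real.sqrt (∑ x, π x *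
        (∑ y ∈ univ.filter (fun y => y ≠ x), (π y / π x) * w y x * a y x ^ k) ^ 2)
      ≤ Real.sqrt (∑ x, ∑ y ∈ univ.filter (fun y => y ≠ x), π x * w x y * a x y ^ 2) *
        Real.sqrt q * c ^ (k - 1) := by
  have hc0 : 0 ≤ c := by
    obtain ⟨x, y, -, rfl⟩ := hc.1
    exact abs_nonneg _
  have hq0 : 0 ≤ q := by
    obtain ⟨x, rfl⟩ := hq.1
    change 0 ≤ w x x
    rw [hdiag x]
    exact sum_nonneg fun y hy ↦ hw x y (mem_filter.1 hy).2.symm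
  have hwq : ∀ x, w x x ≤ q := fun x ↦ hq.2 ⟨x, rfl⟩
  have ha : ∀ x y, x ≠ y → |a x y| ≤ c := fun x y hxy ↦ hc.2 ⟨x, y, hxy, rfl⟩
  constructor
  · refine sqrt_sum_le_sqrt_sum_mul_sqrt_mul _ hq0 (pow_nonneg hc0 _) fun x _ ↦ ?_
    simp_rw [mul_comm (a x _ ^ k)]
    exact mul_sq_sum_mul_pow_le _ hk (hπpos x).le (fun y hy ↦ hw x y (mem_filter.1 hy).2.symm)
      (fun y hy ↦ ha x y (mem_filter.1 hy).2.symm) (hdiag x ▸ hwq x)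
  · rw [← sum_sum_ne_swap]
    refine sqrt_sum_le_sqrt_sum_mul_sqrt_mul _ hq0 (pow_nonneg hc0 _) fun x _ ↦ ?_
    have hmass : ∑ y ∈ univ.filter (· ≠ x), π y / π x * w y x = w x x := by
      simp_rw [div_mul_eq_mul_div, ← sum_div, hstat x]
      field_simp [(hπpos x).ne']
    have hrow := mul_sq_sum_mul_pow_le _ hk (hπpos x).le
      (fun y hy ↦ mul_nonneg (div_nonneg (hπpos y).le (hπpos x).le) (hw y x (mem_filter.1 hy).2))
      (fun y hy ↦ ha y x (mem_filter.1 hy).2) (hmass.trans_le (hwq x))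
    convert hrow using 3 with y
    field_simp [(hπpos x).ne']

/-- `‖B^{(k)} 1‖_π ≤ ⟨a²⟩_π^{1/2} q^{1/2} c^{k−1}` and the same bound for the
`ℓ²(π)`-adjoint applied to the constant function `1`. -/
theorem Bk_one_norm_bound {E : Type*} [Fintype E] [DecidableEq E] [Nonempty E]
    (w : E → E → ℝ) (π : E → ℝ) (a : E → E → ℝ) (c q : ℝ) (k : ℕ) (hk : 1 ≤ k)
    (hw : ∀ x y, x ≠ y → 0 ≤ w x y)
    (hdiag : ∀ x, w x x = ∑ y ∈ univ.filter (fun y => y ≠ x), w x y)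
    (hπpos : ∀ x, 0 < π x) (hπ1 : ∑ x, π x = 1)
    (hstat : ∀ y, ∑ x ∈ univ.filter (fun x => x ≠ y), π x * w x y = π y * w y y)
    (hc : IsGreatest {r : ℝ | ∃ x y, x ≠ y ∧ r = |a x y|} c)
    (hq : IsGreatest (Set.range fun x => w x x) q) :
    Real.sqrt (∑ x, π x * (∑ y ∈ univ.filter (fun y => y ≠ x), a x y ^ k * w x y) ^ 2)
      ≤ Real.sqrt (∑ x, ∑ y ∈ univ.filter (fun y => y ≠ x), π x * w x y * a x y ^ 2) *
        Real.sqrt q * c ^ (k - 1) ∧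
    Real.sqrt (∑ x, π x *
        (∑ y ∈ univ.filter (fun y => y ≠ x), (π y / π x) * w y x * a y x ^ k) ^ 2)
      ≤ Real.sqrt (∑ x, ∑ y ∈ univ.filter (fun y => y ≠ x), π x * w x y * a x y ^ 2) *
        Real.sqrt q * c ^ (k - 1) :=
  Bk_one_norm_bound_general w π a c q k hk hw hdiag hπpos hstat hc hq
end

section
/- For every integer k ≥ 3, the combinatorial sum Σ_{p=1}^{k} (1/p) · #{(ν₁,...,ν_p, μ₁,...,μ_p) : ν_i ≥ 1 integers with ν₁+...+ν_p = k, μ_j ≥ 0 integers with μ₁+...+μ_p = p−1} is at most 5^{k−2}. -/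
/-!
Splitting off the constraint on `μ` and shifting the positive parts of `ν` down by one, stars and
bars counts `binom(k-1, p-1) * binom(2(p-1), p-1)` pairs, and the factor `1/p` turns the central
binomial coefficient into the Catalan number `C (p-1)`. The sum is therefore the binomial transform
`a m = ∑ₙ binom(m, n) C n` of the Catalan numbers at `m = k - 1`. Pascal's rule gives
`a (m+1) = a m + ∑ₙ binom(m, n) C (n+1)`, and `C (n+1) ≤ 4 C n` yields `a (m+1) ≤ 5 a m`;
with `a 2 = 5` this is `a m ≤ 5^(m-1)`.
-/

open Finset

lemma card_tuple_sum_eq_choose (p n : ℕ) :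
    Nat.card {f : Fin p → ℕ // ∑ i, f i = n} = (p + n - 1).choose n := by
  rw [← Nat.card_congr (Sym.equivNatSumOfFintype (Fin p) n), Sym.natCard_sym_eq_choose,
    Nat.card_fin]

def positiveTupleEquiv (p k : ℕ) (hpk : p ≤ k) :
    {f : Fin p → ℕ // (∀ i, 1 ≤ f i) ∧ ∑ i, f i = k} ≃
      {g : Fin p → ℕ // ∑ i, g i = k - p} where
  toFun f := ⟨fun i => f.1 i - 1, by
    have h : ∑ i, (f.1 i - 1) + p = k :=
      calc ∑ i, (f.1 i - 1) + p = ∑ i, (f.1 i - 1 + 1) := by simp [sum_add_distrib]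
        _ = k := (sum_congr rfl fun i _ => Nat.sub_add_cancel (f.2.1 i)).trans f.2.2
    show ∑ i, (f.1 i - 1) = k - p
    omega⟩
  invFun g := ⟨fun i => g.1 i + 1, fun _ => Nat.le_add_left 1 _, by
    simp only [sum_add_distrib, g.2, sum_const, card_univ, Fintype.card_fin,
      smul_eq_mul, mul_one]
    omega⟩
  left_inv f := Subtype.ext <| funext fun i => Nat.sub_add_cancel (f.2.1 i)
  right_inv g := Subtype.ext <| funext fun i => Nat.add_sub_cancel (g.1 i) 1

lemma card_positive_tuple_sum_eq_choose {p k : ℕ} (hp : 1 ≤ p) (hpk : p ≤ k) :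
    Nat.card {f : Fin p → ℕ // (∀ i, 1 ≤ f i) ∧ ∑ i, f i = k} = (k - 1).choose (p - 1) := by
  rw [Nat.card_congr (positiveTupleEquiv p k hpk), card_tuple_sum_eq_choose,
    show p + (k - p) - 1 = k - 1 by omega, ← Nat.choose_symm (by omega : p - 1 ≤ k - 1),
    show k - 1 - (p - 1) = k - p by omega]

abbrev CompositionPair (k p : ℕ) : Type :=
  {νμ : (Fin p → ℕ) × (Fin p → ℕ) //
    (∀ i, 1 ≤ νμ.1 i) ∧ (∑ i, νμ.1 i) = k ∧ (∑ i, νμ.2 i) = p - 1}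

lemma card_compositionPair_eq {p k : ℕ} (hp : 1 ≤ p) (hpk : p ≤ k) :
    Nat.card (CompositionPair k p) = p * ((k - 1).choose (p - 1) * catalan (p - 1)) := by
  have e := (Equiv.subtypeEquivRight fun _ => and_assoc.symm).trans
    (Equiv.subtypeProdEquivProd (p := fun ν : Fin p → ℕ => (∀ i, 1 ≤ ν i) ∧ ∑ i, ν i = k)
      (q := fun μ : Fin p → ℕ => ∑ i, μ i = p - 1))
  have hcentral : p * catalan (p - 1) = (2 * (p - 1)).choose (p - 1) := by
    simpa [Nat.sub_add_cancel hp, Nat.centralBinom] using succ_mul_catalan_eq_centralBinom (p - 1)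
  rw [Nat.card_congr e, Nat.card_prod, card_positive_tuple_sum_eq_choose hp hpk,
    card_tuple_sum_eq_choose, mul_left_comm, hcentral, show p + (p - 1) - 1 = 2 * (p - 1) by omega]

lemma catalan_succ_le_four_mul (n : ℕ) : catalan (n + 1) ≤ 4 * catalan n := by
  have hratio :
      (n + 1) * ((n + 2) * catalan (n + 1)) = (n + 1) * (2 * (2 * n + 1) * catalan n) := by
    rw [succ_mul_catalan_eq_centralBinom (n + 1), Nat.succ_mul_centralBinom_succ,
      ← succ_mul_catalan_eq_centralBinom n]
    ring
  nlinarith [Nat.eq_of_mul_eq_mul_left n.succ_pos hratio]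

def catalanBinomialSum (m : ℕ) : ℕ := ∑ n ∈ range (m + 1), m.choose n * catalan n

lemma catalanBinomialSum_succ (m : ℕ) :
    catalanBinomialSum (m + 1) =
      catalanBinomialSum m + ∑ n ∈ range (m + 1), m.choose n * catalan (n + 1) :=
  sum_choose_succ_mul (fun n _ => catalan n) m

lemma catalanBinomialSum_succ_le (m : ℕ) :
    catalanBinomialSum (m + 1) ≤ 5 * catalanBinomialSum m := by
  have hstep :
      ∑ n ∈ range (m + 1), m.choose n * catalan (n + 1) ≤ 4 * catalanBinomialSum m := by
    rw [catalanBinomialSum, mul_sum]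
    exact sum_le_sum fun n _ => by
      nlinarith [catalan_succ_le_four_mul n, Nat.zero_le (m.choose n)]
  rw [catalanBinomialSum_succ]
  omega

lemma catalanBinomialSum_add_two_le (m : ℕ) : catalanBinomialSum (m + 2) ≤ 5 ^ (m + 1) := by
  induction m with
  | zero => simp [catalanBinomialSum, sum_range_succ, catalan_two]
  | succ m ih =>
    calc catalanBinomialSum (m + 3) ≤ 5 * catalanBinomialSum (m + 2) :=
          catalanBinomialSum_succ_le _
      _ ≤ 5 ^ (m + 2) := by rw [pow_succ']; omega

lemma sum_inv_mul_card_compositionPair {k : ℕ} (hk : 1 ≤ k) :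
    ∑ p ∈ Icc 1 k, (1 / (p : ℝ)) * (Nat.card (CompositionPair k p) : ℝ) =
      catalanBinomialSum (k - 1) := by
  have hterm : ∀ p ∈ Icc 1 k, (1 / (p : ℝ)) * (Nat.card (CompositionPair k p) : ℝ) =
      ((k - 1).choose (p - 1) * catalan (p - 1) : ℕ) := by
    intro p hp
    obtain ⟨hp, hpk⟩ := mem_Icc.mp hp
    have hp0 : (p : ℝ) ≠ 0 := by exact_mod_cast (by omega : p ≠ 0)
    rw [card_compositionPair_eq hp hpk, Nat.cast_mul p, ← mul_assoc, one_div_mul_cancel hp0,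
      one_mul]
  rw [sum_congr rfl hterm, ← Nat.cast_sum, catalanBinomialSum, Nat.sub_add_cancel hk,
    ← Ico_add_one_right_eq_Icc, sum_Ico_eq_sum_range]
  simp only [Nat.add_sub_cancel_left, Nat.add_sub_cancel]

/-- Lezaud's combinatorial bound
`Σ_{p=1}^k (1/p) #{(ν,μ) : ν composition of k into p positive parts,
μ composition of p−1 into p non-negative parts} ≤ 5^{k−2}` for `k ≥ 3`. -/
theorem composition_count_bound (k : ℕ) (hk : 3 ≤ k) :
    ∑ p ∈ Finset.Icc 1 k, (1 / (p : ℝ)) *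
      (Nat.card {νμ : (Fin p → ℕ) × (Fin p → ℕ) //
        (∀ i, 1 ≤ νμ.1 i) ∧ (∑ i, νμ.1 i) = k ∧ (∑ i, νμ.2 i) = p - 1} : ℝ)
      ≤ (5 : ℝ) ^ (k - 2) := by
  obtain ⟨m, rfl⟩ := Nat.exists_eq_add_of_le' hk
  rw [sum_inv_mul_card_compositionPair (by omega)]
  exact_mod_cast catalanBinomialSum_add_two_le m
end

section
/- Let X(t) be an irreducible continuous-time Markov chain on finite E with generator W, stationary π, and let A(t) = Σ_jumps a_{x→y} be a linear counting observable with bounded weights |a_{xy}| ≤ c. Set ⟨a⟩_π = Σ_{x≠y} π_x w_{xy} a_{xy}, ⟨a²⟩_π = Σ_{x≠y} π_x w_{xy} a_{xy}², ⟨k⟩_π = Σ_{x≠y} π_x w_{xy}, and assume the moment generating function bound E_π[e^{u(A(t) − t⟨a⟩_π)}] ≤ exp(t(⟨k⟩_π(e^{cu} − cu − 1) + (q⟨a²⟩_π u²/ε)(1 − 5cqu/ε)⁻¹)) for all 0 ≤ u < ε/(5cq). Then for every γ > 0, P_π(A(t)/t ≥ ⟨a⟩_π + γ) ≤ exp(−t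 γ² / (2(⟨k⟩_π c² + 2q⟨a²⟩_π/ε + max{c/3, 5cq/ε}·γ))). -/
open MeasureTheory Real

/-!
Chernoff's bound with the exponent `u = γ / (V + 2 M γ)`, where `V = K c² + 2 q a2 / ε` and
`M = max (c / 3) (5 c q / ε)`. Both terms of the exponent in the moment generating function
bound are dominated by the sub-gamma form `V u² / (2 (1 - M u))`: the first through
`eˣ - x - 1 ≤ x² / (2 (1 - x / 3))`, the second since `5 c q u / ε ≤ M u`. At this `u` one has
`M u ≤ 1 / 2`, and `u γ - V u² / (2 (1 - M u)) = γ² / (2 (V + M γ))`.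
-/

lemma nonneg_of_hasDerivAt_of_nonneg {f f' : ℝ → ℝ} (hf : ∀ x, HasDerivAt f (f' x) x)
    (hf₀ : f 0 = 0) (hf' : ∀ x, 0 ≤ x → 0 ≤ f' x) {x : ℝ} (hx : 0 ≤ x) : 0 ≤ f x := by
  have hmono : MonotoneOn f (Set.Ici 0) :=
    monotoneOn_of_hasDerivWithinAt_nonneg (convex_Ici 0)
      (fun y _ ↦ (hf y).continuousAt.continuousWithinAt) (fun y _ ↦ (hf y).hasDerivWithinAt)
      (fun y hy ↦ hf' y (interior_subset hy))
  simpa [hf₀] using hmono Set.self_mem_Ici hx hx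

lemma sub_one_mul_exp_add_one_nonneg {x : ℝ} (hx : 0 ≤ x) : 0 ≤ (x - 1) * exp x + 1 := by
  refine nonneg_of_hasDerivAt_of_nonneg (f := fun x ↦ (x - 1) * exp x + 1)
    (f' := fun y ↦ y * exp y) (fun y ↦ ?_) (by simp) (fun y (hy : 0 ≤ y) ↦ by positivity) hx
  refine ((((hasDerivAt_id y).sub_const 1).mul (hasDerivAt_exp y)).add_const 1).congr_deriv ?_
  simp only [id]; ring

lemma sub_two_mul_exp_add_add_two_nonneg {x : ℝ} (hx : 0 ≤ x) :
    0 ≤ (x - 2) * exp x + x + 2 := by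
  refine nonneg_of_hasDerivAt_of_nonneg (f := fun x ↦ (x - 2) * exp x + x + 2)
    (f' := fun y ↦ (y - 1) * exp y + 1) (fun y ↦ ?_) (by norm_num)
    (fun y hy ↦ sub_one_mul_exp_add_one_nonneg hy) hx
  refine ((((hasDerivAt_id y).sub_const 2).mul (hasDerivAt_exp y)).add
    (hasDerivAt_id y)).add_const 2 |>.congr_deriv ?_
  simp only [id]; ring

lemma exp_sub_sub_one_mul_one_sub_div_three_le {x : ℝ} (hx : 0 ≤ x) :
    (exp x - x - 1) * (1 - x / 3) ≤ x ^ 2 / 2 := by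
  have h := nonneg_of_hasDerivAt_of_nonneg
    (f := fun x ↦ x ^ 2 / 2 - (exp x - x - 1) * (1 - x / 3))
    (f' := fun y ↦ ((y - 2) * exp y + y + 2) / 3) (fun y ↦ ?_) (by simp)
    (fun y hy ↦ by linarith [sub_two_mul_exp_add_add_two_nonneg hy]) hx
  · linarith
  refine (((hasDerivAt_pow 2 y).div_const 2).sub ((((hasDerivAt_exp y).sub
    (hasDerivAt_id y)).sub_const 1).mul
      (((hasDerivAt_id y).div_const 3).const_sub 1))).congr_deriv ?_
  simp only [id, Pi.sub_apply]; ring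

lemma exp_sub_sub_one_le_sq_div {x y : ℝ} (hx : 0 ≤ x) (hxy : x / 3 ≤ y) (hy : y < 1) :
    exp x - x - 1 ≤ x ^ 2 / (2 * (1 - y)) := by
  have hpos : 0 ≤ exp x - x - 1 := by linarith [add_one_le_exp x]
  rw [le_div_iff₀ (by linarith)]
  nlinarith [exp_sub_sub_one_mul_one_sub_div_three_le hx, mul_le_mul_of_nonneg_left hxy hpos]

noncomputable def subGammaExponent (V M u : ℝ) : ℝ := V * u ^ 2 / (2 * (1 - M * u))

lemma mul_div_add_two_mul_le_half {V M γ : ℝ} (hV : 0 ≤ V) (hM : 0 < M) (hγ : 0 < γ) :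
    M * (γ / (V + 2 * M * γ)) ≤ 1 / 2 := by
  rw [mul_div_assoc', div_le_iff₀ (by positivity)]
  linarith

lemma mul_sub_subGammaExponent {V M γ : ℝ} (hV : 0 ≤ V) (hM : 0 < M) (hγ : 0 < γ) :
    γ / (V + 2 * M * γ) * γ - subGammaExponent V M (γ / (V + 2 * M * γ)) =
      γ ^ 2 / (2 * (V + M * γ)) := by
  have h₁ : 0 < V + 2 * M * γ := by positivity
  have h₂ : 0 < V + M * γ := by positivity
  have h₃ : 1 - M * (γ / (V + 2 * M * γ)) = (V + M * γ) / (V + 2 * M * γ) := by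
    field_simp; ring
  rw [subGammaExponent, h₃]
  field_simp
  ring

lemma mgf_exponent_le_subGammaExponent {K a2 c q ε M u : ℝ} (hK : 0 ≤ K) (ha2 : 0 ≤ a2)
    (hc : 0 ≤ c) (hq : 0 ≤ q) (hε : 0 < ε) (hu : 0 ≤ u) (hcM : c / 3 ≤ M)
    (hqM : 5 * c * q / ε ≤ M) (hMu : M * u < 1) :
    K * (exp (c * u) - c * u - 1) + q * a2 * u ^ 2 / ε * (1 - 5 * c * q * u / ε)⁻¹ ≤
      subGammaExponent (K * c ^ 2 + 2 * q * a2 / ε) M u := by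
  have hexp : exp (c * u) - c * u - 1 ≤ (c * u) ^ 2 / (2 * (1 - M * u)) :=
    exp_sub_sub_one_le_sq_div (by positivity) (by nlinarith) hMu
  have hinv : (1 - 5 * c * q * u / ε)⁻¹ ≤ (1 - M * u)⁻¹ := by
    apply inv_anti₀ (by linarith)
    have : 5 * c * q * u / ε ≤ M * u := by
      rw [mul_div_right_comm]; exact mul_le_mul_of_nonneg_right hqM hu
    linarith
  calc K * (exp (c * u) - c * u - 1) + q * a2 * u ^ 2 / ε * (1 - 5 * c * q * u / ε)⁻¹
      ≤ K * ((c * u) ^ 2 / (2 * (1 - M * u))) + q * a2 * u ^ 2 / ε * (1 - M * u)⁻¹ := by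
        gcongr
    _ = subGammaExponent (K * c ^ 2 + 2 * q * a2 / ε) M u := by
        rw [subGammaExponent]; field_simp

lemma measure_ge_le_ofReal_exp_of_mgf_le {Ω : Type*} [MeasurableSpace Ω] {μ : Measure Ω}
    [IsFiniteMeasure μ] {X : Ω → ℝ} {u a Λ : ℝ} (hu : 0 ≤ u)
    (hint : Integrable (fun ω ↦ exp (u * X ω)) μ) (hmgf : ProbabilityTheory.mgf X μ u ≤ exp Λ) :
    μ {ω | a ≤ X ω} ≤ ENNReal.ofReal (exp (Λ - u * a)) := by
  rw [← ofReal_measureReal (measure_ne_top _ _)]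
  refine ENNReal.ofReal_le_ofReal ((ProbabilityTheory.measure_ge_le_exp_mul_mgf a hu hint).trans ?_)
  rw [sub_eq_neg_add, exp_add, neg_mul]
  gcongr

/-- `m = ⟨a⟩_π`, `a2 = ⟨a²⟩_π`, `K = ⟨k⟩_π`, `q` the maximal escape rate, `ε` the spectral gap. -/
theorem concentration_bound_general {Ω : Type*} [MeasurableSpace Ω] (ℙ : Measure Ω)
    [IsProbabilityMeasure ℙ] (At : Ω → ℝ)
    (t m a2 K c q ε : ℝ) (ht : 0 < t) (ha2 : 0 ≤ a2) (hK : 0 ≤ K)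
    (hc : 0 < c) (hq : 0 < q) (hε : 0 < ε)
    (hint : ∀ u : ℝ, 0 ≤ u → u < ε / (5 * c * q) →
      Integrable (fun ω => exp (u * (At ω - t * m))) ℙ)
    (hmgf : ∀ u : ℝ, 0 ≤ u → u < ε / (5 * c * q) →
      ∫ ω, exp (u * (At ω - t * m)) ∂ℙ ≤
        exp (t * (K * (exp (c * u) - c * u - 1) +
          q * a2 * u ^ 2 / ε * (1 - 5 * c * q * u / ε)⁻¹))) :
    ∀ γ : ℝ, 0 < γ →
      ℙ {ω | m + γ ≤ At ω / t} ≤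
        ENNReal.ofReal (exp (-(t * γ ^ 2 /
          (2 * (K * c ^ 2 + 2 * q * a2 / ε + max (c / 3) (5 * c * q / ε) * γ))))) := by
  intro γ hγ
  set M := max (c / 3) (5 * c * q / ε)
  set V := K * c ^ 2 + 2 * q * a2 / ε
  set u := γ / (V + 2 * M * γ)
  have hM : 0 < M := lt_max_of_lt_left (by positivity)
  have hV : 0 ≤ V := by positivity
  have hMu : M * u ≤ 1 / 2 := mul_div_add_two_mul_le_half hV hM hγ
  have hu : 0 ≤ u := by positivity
  have hu_lt : u < ε / (5 * c * q) := by
    have h : 5 * c * q / ε * u < 1 := by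
      linarith [mul_le_mul_of_nonneg_right (le_max_right (c / 3) (5 * c * q / ε)) hu]
    rw [lt_div_iff₀ (by positivity)]
    calc u * (5 * c * q) = 5 * c * q / ε * u * ε := by field_simp
      _ < 1 * ε := by gcongr
      _ = ε := one_mul ε
  have hset : {ω | m + γ ≤ At ω / t} = {ω | t * γ ≤ At ω - t * m} := by
    ext ω
    simp only [Set.mem_ofPred_eq, le_div_iff₀ ht]
    constructor <;> intro h <;> linarith
  rw [hset]
  refine (measure_ge_le_ofReal_exp_of_mgf_le hu (hint u hu hu_lt) (hmgf u hu hu_lt)).trans ?_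
  gcongr
  have hexponent : K * (exp (c * u) - c * u - 1) +
      q * a2 * u ^ 2 / ε * (1 - 5 * c * q * u / ε)⁻¹ ≤ u * γ - γ ^ 2 / (2 * (V + M * γ)) := by
    linarith [mgf_exponent_le_subGammaExponent hK ha2 hc.le hq.le hε hu
      (le_max_left _ _) (le_max_right _ _) (by linarith), mul_sub_subGammaExponent hV hM hγ]
  rw [mul_div_assoc t (γ ^ 2)]
  linarith [mul_le_mul_of_nonneg_left hexponent ht.le]

/-- concentration bound from the moment generating function estimate via
Chernoff's bound. `m = ⟨a⟩_π`, `a2 = ⟨a²⟩_π`, `K = ⟨k⟩_π`, `q` the maximal escape rate,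
`ε` the spectral gap. -/
theorem concentration_bound {Ω : Type*} [MeasurableSpace Ω] (ℙ : Measure Ω)
    [IsProbabilityMeasure ℙ] (At : Ω → ℝ) (hAt : Measurable At)
    (t m a2 K c q ε : ℝ) (ht : 0 < t) (ha2 : 0 ≤ a2) (hK : 0 ≤ K)
    (hc : 0 < c) (hq : 0 < q) (hε : 0 < ε)
    (hint : ∀ u : ℝ, 0 ≤ u → u < ε / (5 * c * q) →
      Integrable (fun ω => exp (u * (At ω - t * m))) ℙ)
    (hmgf : ∀ u : ℝ, 0 ≤ u → u < ε / (5 * c * q) →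
      ∫ ω, exp (u * (At ω - t * m)) ∂ℙ ≤
        exp (t * (K * (exp (c * u) - c * u - 1) +
          q * a2 * u ^ 2 / ε * (1 - 5 * c * q * u / ε)⁻¹))) :
    ∀ γ : ℝ, 0 < γ →
      ℙ {ω | m + γ ≤ At ω / t} ≤
        ENNReal.ofReal (exp (-(t * γ ^ 2 /
          (2 * (K * c ^ 2 + 2 * q * a2 / ε + max (c / 3) (5 * c * q / ε) * γ))))) :=
  concentration_bound_general ℙ At t m a2 K c q ε ht ha2 hK hc hq hε hint hmgf
end

section
/- In the setting of the previous statement, the asymptotic variance rate lim_{t→∞} σ²_π(t)/t exists and equals ⟨a²⟩_π − 2⟨π| W'₀ W⁻¹ W'₀ |1⟩, and the short-time rate satisfies lim_{t→0} σ²_π(t)/t = ⟨a²⟩_π. -/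
/-! The pseudoinverse `W⁻¹ = M - |1⟩⟨π|` satisfies `W (W⁻¹)² = W⁻¹`, because `W M = 1 - |1⟩⟨π|`
and `|1⟩⟨π|` annihilates `W⁻¹`. Hence `σ²(t)/t = g((e^{tW} - 1)/t)` for the continuous function
`g D = ⟨a²⟩ + 2⟨π|W'(D (W⁻¹)² - W⁻¹)W'|1⟩`. The difference quotient tends to `0` as `t → ∞`,
since `e^{tW}` converges, and to the derivative `W` of `t ↦ e^{tW}` at `0` as `t → 0⁺`, where
`g W = ⟨a²⟩` by the identity above. -/

open Matrix Filter Topology NormedSpace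

namespace Matrix

section Pseudoinverse

variable {n R : Type*} [Fintype n] [DecidableEq n] [CommRing R]
  {W M : Matrix n n R} {π : n → R}

theorem vecMul_eq_self_of_mul_add_vecMulVec_eq_one (hstat : π ᵥ* W = 0)
    (hπ1 : π ⬝ᵥ (fun _ => 1) = 1) (hM : (W + vecMulVec (fun _ => 1) π) * M = 1) :
    π ᵥ* M = π := by
  have hπP : π ᵥ* (W + vecMulVec (fun _ => 1) π) = π := by
    rw [vecMul_add, hstat, vecMul_vecMulVec, hπ1, one_smul, zero_add]
  calc π ᵥ* M = π ᵥ* (W + vecMulVec (fun _ => 1) π) ᵥ* M := by rw [hπP]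
    _ = π := by rw [vecMul_vecMul, hM, vecMul_one]

theorem mul_pseudoinverse_eq (hrow : W *ᵥ (fun _ => 1) = 0) (hstat : π ᵥ* W = 0)
    (hπ1 : π ⬝ᵥ (fun _ => 1) = 1) (hM : (W + vecMulVec (fun _ => 1) π) * M = 1) :
    W * (M - vecMulVec (fun _ => 1) π) = 1 - vecMulVec (fun _ => 1) π := by
  have hπM := vecMul_eq_self_of_mul_add_vecMulVec_eq_one hstat hπ1 hM
  have hWP : W * vecMulVec (fun _ => 1) π = 0 := by
    rw [mul_vecMulVec, hrow, zero_vecMulVec]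
  rw [add_mul, vecMulVec_mul, hπM] at hM
  rw [mul_sub, hWP, sub_zero, ← hM, add_sub_cancel_right]

theorem vecMulVec_mul_pseudoinverse_eq_zero (hstat : π ᵥ* W = 0)
    (hπ1 : π ⬝ᵥ (fun _ => 1) = 1) (hM : (W + vecMulVec (fun _ => 1) π) * M = 1) :
    vecMulVec (fun _ : n => 1) π * (M - vecMulVec (fun _ => 1) π) = 0 := by
  rw [vecMulVec_mul, vecMul_sub, vecMul_eq_self_of_mul_add_vecMulVec_eq_one hstat hπ1 hM,
    vecMul_vecMulVec, hπ1, one_smul, sub_self, vecMulVec_zero]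

theorem mul_pseudoinverse_sq_eq (hrow : W *ᵥ (fun _ => 1) = 0) (hstat : π ᵥ* W = 0)
    (hπ1 : π ⬝ᵥ (fun _ => 1) = 1) (hM : (W + vecMulVec (fun _ => 1) π) * M = 1) :
    W * ((M - vecMulVec (fun _ => 1) π) * (M - vecMulVec (fun _ => 1) π)) =
      M - vecMulVec (fun _ => 1) π := by
  rw [← Matrix.mul_assoc, mul_pseudoinverse_eq hrow hstat hπ1 hM, sub_mul, Matrix.one_mul,
    vecMulVec_mul_pseudoinverse_eq_zero hstat hπ1 hM, sub_zero]

end Pseudoinverse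

theorem dotProduct_mul_smul_mul_mulVec {n R : Type*} [Fintype n] [CommRing R]
    (u v : n → R) (B A C : Matrix n n R) (c : R) :
    u ⬝ᵥ (B * (c • A) * C) *ᵥ v = c * (u ⬝ᵥ (B * A * C) *ᵥ v) := by
  rw [Matrix.mul_smul, Matrix.smul_mul, smul_mulVec, dotProduct_smul, smul_eq_mul]

end Matrix

theorem tendsto_inv_smul_exp_smul_sub_one {𝔸 : Type*} [NormedRing 𝔸] [NormedAlgebra ℝ 𝔸]
    [CompleteSpace 𝔸] (A : 𝔸) :
    Tendsto (fun t : ℝ => t⁻¹ • (exp (t • A) - 1)) (𝓝[≠] 0) (𝓝 A) := by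
  have hderiv := hasDerivAt_iff_tendsto_slope_zero.mp (hasDerivAt_exp_smul_const' A (0 : ℝ))
  simpa only [zero_add, zero_smul, exp_zero, mul_one] using hderiv

theorem Matrix.tendsto_inv_smul_exp_smul_sub_one {n : Type*} [Fintype n] [DecidableEq n]
    (A : Matrix n n ℝ) :
    Tendsto (fun t : ℝ => t⁻¹ • (exp (t • A) - 1)) (𝓝[≠] 0) (𝓝 A) := by
  let _ : NormedRing (Matrix n n ℝ) := Matrix.linftyOpNormedRing
  let _ : NormedAlgebra ℝ (Matrix n n ℝ) := Matrix.linftyOpNormedAlgebra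
  exact _root_.tendsto_inv_smul_exp_smul_sub_one A

theorem asymptotic_and_short_time_variance_general {E : Type*} [Fintype E] [DecidableEq E]
    (W : Matrix E E ℝ) (π : E → ℝ) (a : E → E → ℝ)
    (hrow : W *ᵥ (fun _ => 1) = 0)
    (hπ1 : ∑ x, π x = 1)
    (hstat : π ᵥ* W = 0)
    (M : Matrix E E ℝ)
    (hM : (W + vecMulVec (fun _ => 1) π) * M = 1 ∧ M * (W + vecMulVec (fun _ => 1) π) = 1)
    (hergodic : Tendsto (fun t : ℝ => NormedSpace.exp (t • W)) atTop
      (nhds (vecMulVec (fun _ => 1) π))) :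
    let W' : Matrix E E ℝ := Matrix.of (fun x y => if x = y then 0 else a x y * W x y)
    let Winv : Matrix E E ℝ := M - vecMulVec (fun _ => 1) π
    let a2 : ℝ := ∑ x, ∑ y ∈ Finset.univ.filter (fun y => y ≠ x), π x * W x y * a x y ^ 2
    let σ2 : ℝ → ℝ := fun t =>
      t * a2 + 2 * (π ⬝ᵥ (W' * ((NormedSpace.exp (t • W) - 1) * (Winv * Winv) - t • Winv)
        * W') *ᵥ (fun _ => 1))
    Tendsto (fun t => σ2 t / t) atTop
        (nhds (a2 - 2 * (π ⬝ᵥ (W' * Winv * W') *ᵥ (fun _ => 1)))) ∧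
      Tendsto (fun t => σ2 t / t) (nhdsWithin 0 {t : ℝ | 0 < t}) (nhds a2) := by
  intro W' Winv a2 σ2
  have hπ1' : π ⬝ᵥ (fun _ => 1) = 1 := by simpa [dotProduct] using hπ1
  have hWQ : W * (Winv * Winv) = Winv := mul_pseudoinverse_sq_eq hrow hstat hπ1' hM.1
  set g : Matrix E E ℝ → ℝ := fun D =>
    a2 + 2 * (π ⬝ᵥ (W' * (D * (Winv * Winv) - Winv) * W') *ᵥ (fun _ => 1))
  have hg : Continuous g := by fun_prop
  have hrate : ∀ t ≠ 0, σ2 t / t = g (t⁻¹ • (exp (t • W) - 1)) := by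
    intro t ht
    have hsplit : (exp (t • W) - 1) * (Winv * Winv) - t • Winv =
        t • ((t⁻¹ • (exp (t • W) - 1)) * (Winv * Winv) - Winv) := by
      rw [Matrix.smul_mul, smul_sub t (t⁻¹ • _), smul_inv_smul₀ ht]
    simp only [σ2, g, hsplit, dotProduct_mul_smul_mul_mulVec]
    field_simp
  have hlim : ∀ {l : Filter ℝ} {D : Matrix E E ℝ}, (∀ᶠ t in l, t ≠ 0) →
      Tendsto (fun t : ℝ => t⁻¹ • (exp (t • W) - 1)) l (𝓝 D) →
      Tendsto (fun t => σ2 t / t) l (𝓝 (g D)) := fun hne hD =>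
    ((hg.tendsto _).comp hD).congr' (hne.mono fun t ht => (hrate t ht).symm)
  constructor
  · have hg0 : g 0 = a2 - 2 * (π ⬝ᵥ (W' * Winv * W') *ᵥ (fun _ => 1)) := by
      simp only [g, Matrix.zero_mul, zero_sub, Matrix.mul_neg, Matrix.neg_mul, neg_mulVec,
        dotProduct_neg]
      ring
    rw [← hg0]
    exact hlim (eventually_ne_atTop 0)
      (by simpa using tendsto_inv_atTop_zero.smul (hergodic.sub_const 1))
  · have hgW : g W = a2 := by
      simp only [g, hWQ, sub_self, Matrix.zero_mul, zero_mulVec, dotProduct_zero, mul_zero,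
        add_zero]
    rw [← hgW]
    exact hlim (eventually_mem_nhdsWithin.mono fun t (ht : 0 < t) => ht.ne')
      ((tendsto_inv_smul_exp_smul_sub_one W).mono_left
        (nhdsWithin_mono 0 fun t (ht : 0 < t) => ht.ne'))

/-- with `σ²_π(t) = t⟨a²⟩_π + 2⟨π|W'₀((e^{tW}−I)(W⁻¹)² − tW⁻¹)W'₀|1⟩`,
the asymptotic variance rate is `lim_{t→∞} σ²_π(t)/t = ⟨a²⟩_π − 2⟨π|W'₀W⁻¹W'₀|1⟩` and the
short-time rate is `lim_{t→0} σ²_π(t)/t = ⟨a²⟩_π`. -/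
theorem asymptotic_and_short_time_variance {E : Type*} [Fintype E] [DecidableEq E] [Nonempty E]
    (W : Matrix E E ℝ) (π : E → ℝ) (a : E → E → ℝ)
    (hoff : ∀ x y, x ≠ y → 0 ≤ W x y)
    (hrow : W *ᵥ (fun _ => 1) = 0)
    (hπpos : ∀ x, 0 < π x) (hπ1 : ∑ x, π x = 1)
    (hstat : π ᵥ* W = 0)
    (M : Matrix E E ℝ)
    (hM : (W + vecMulVec (fun _ => 1) π) * M = 1 ∧ M * (W + vecMulVec (fun _ => 1) π) = 1)
    (hergodic : Tendsto (fun t : ℝ => NormedSpace.exp (t • W)) atTop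
      (nhds (vecMulVec (fun _ => 1) π))) :
    let W' : Matrix E E ℝ := Matrix.of (fun x y => if x = y then 0 else a x y * W x y)
    let Winv : Matrix E E ℝ := M - vecMulVec (fun _ => 1) π
    let a2 : ℝ := ∑ x, ∑ y ∈ Finset.univ.filter (fun y => y ≠ x), π x * W x y * a x y ^ 2
    let σ2 : ℝ → ℝ := fun t =>
      t * a2 + 2 * (π ⬝ᵥ (W' * ((NormedSpace.exp (t • W) - 1) * (Winv * Winv) - t • Winv)
        * W') *ᵥ (fun _ => 1))
    Tendsto (fun t => σ2 t / t) atTop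
        (nhds (a2 - 2 * (π ⬝ᵥ (W' * Winv * W') *ᵥ (fun _ => 1)))) ∧
      Tendsto (fun t => σ2 t / t) (nhdsWithin 0 {t : ℝ | 0 < t}) (nhds a2) :=
  asymptotic_and_short_time_variance_general W π a hrow hπ1 hstat M hM hergodic
end
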